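/- For the Gaussian kernel k(x,y) = exp(−(x−y)²/(2σ²)) on ℝ and any two probability measures μ, ν on ℝ, the squared MMD decomposes as MMD²(μ, ν; k) = ∑_{n=0}^∞ (1/(σ^{2n} n!)) ( m̃ₙ(μ) − m̃ₙ(ν) )², where m̃ₙ(μ) = E_{x∼μ}[ e^{−x²/(2σ²)} xⁿ ]. -/

import Mathlib

/-! Expanding `e^{xy/σ²}` as a power series writes the Gaussian kernel as the feature expansion
`k(x,y) = ∑ₙ cₙ φₙ(x) φₙ(y)` with `φₙ(x) = e^{−x²/(2σ²)} xⁿ` and `cₙ = 1/(σ^{2n} n!) ≥ 0`.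
Replacing `x, y` by `|x|, |y|` turns this series into the series of absolute values, whose sum is
again a value of the kernel, hence at most `1`. Dominated convergence therefore lets us integrate
term by term against `μ ⊗ ν`, giving `∬ k dμ dν = ∑ₙ cₙ m̃ₙ(μ) m̃ₙ(ν)`, and the MMD is the
corresponding combination of three such series. -/

open MeasureTheory

/-- The squared maximum mean discrepancy between two probability measures on `ℝ` with respect
to a kernel `k`: `MMD²(μ, ν; k) = ∬k dμ⊗dμ + ∬k dν⊗dν − 2∬k dμ⊗dν`. -/
noncomputable def mmdSq (k : ℝ → ℝ → ℝ) (μ ν : Measure ℝ) : ℝ :=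
  (∫ x, ∫ x', k x x' ∂μ ∂μ) + (∫ y, ∫ y', k y y' ∂ν ∂ν) - 2 * ∫ x, ∫ y, k x y ∂ν ∂μ

/-- The Gaussian kernel `k(x,y) = exp(−(x−y)²/(2σ²))`. -/
noncomputable def gaussKernel (σ : ℝ) : ℝ → ℝ → ℝ :=
  fun x y => Real.exp (-(x - y) ^ 2 / (2 * σ ^ 2))

/-- The weighted moment `m̃ₙ(μ) = E_{x∼μ}[e^{−x²/(2σ²)} xⁿ]`. -/
noncomputable def weightedMoment (σ : ℝ) (n : ℕ) (μ : Measure ℝ) : ℝ :=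
  ∫ x, Real.exp (-x ^ 2 / (2 * σ ^ 2)) * x ^ n ∂μ

noncomputable def gaussFeature (σ : ℝ) (n : ℕ) (x : ℝ) : ℝ :=
  Real.exp (-x ^ 2 / (2 * σ ^ 2)) * x ^ n

@[fun_prop]
lemma continuous_gaussFeature (σ : ℝ) (n : ℕ) : Continuous (gaussFeature σ n) := by
  unfold gaussFeature
  fun_prop

lemma abs_gaussFeature (σ : ℝ) (n : ℕ) (x : ℝ) : |gaussFeature σ n x| = gaussFeature σ n |x| := by
  rw [gaussFeature, gaussFeature, abs_mul, abs_of_pos (Real.exp_pos _), abs_pow, sq_abs]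

@[fun_prop]
lemma continuous_gaussKernel_uncurry (σ : ℝ) :
    Continuous (fun p : ℝ × ℝ => gaussKernel σ p.1 p.2) := by
  unfold gaussKernel
  fun_prop

lemma gaussKernel_pos (σ x y : ℝ) : 0 < gaussKernel σ x y := Real.exp_pos _

lemma gaussKernel_le_one (σ x y : ℝ) : gaussKernel σ x y ≤ 1 :=
  Real.exp_le_one_iff.mpr <| div_nonpos_of_nonpos_of_nonneg (neg_nonpos.mpr (sq_nonneg _))
    (by positivity)

lemma gaussKernel_eq_mul_exp (σ x y : ℝ) :
    gaussKernel σ x y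
      = Real.exp (-x ^ 2 / (2 * σ ^ 2)) * Real.exp (-y ^ 2 / (2 * σ ^ 2))
          * Real.exp (x * y / σ ^ 2) := by
  rw [gaussKernel, ← Real.exp_add, ← Real.exp_add]
  congr 1
  ring

lemma one_div_pow_mul_factorial_nonneg (σ : ℝ) (n : ℕ) : 0 ≤ 1 / (σ ^ (2 * n) * n.factorial) := by
  rw [pow_mul]
  positivity

lemma hasSum_gaussKernel (σ x y : ℝ) :
    HasSum (fun n : ℕ => 1 / (σ ^ (2 * n) * n.factorial) * (gaussFeature σ n x * gaussFeature σ n y))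
      (gaussKernel σ x y) := by
  have hexp : HasSum (fun n : ℕ => (x * y / σ ^ 2) ^ n / n.factorial) (Real.exp (x * y / σ ^ 2)) := by
    rw [Real.exp_eq_exp_ℝ]
    exact NormedSpace.expSeries_div_hasSum_exp _
  rw [gaussKernel_eq_mul_exp]
  refine (hexp.mul_left _).congr_fun fun n => ?_
  simp only [gaussFeature]
  ring

lemma hasSum_abs_gaussKernel (σ x y : ℝ) :
    HasSum (fun n : ℕ => |1 / (σ ^ (2 * n) * n.factorial) * (gaussFeature σ n x * gaussFeature σ n y)|)
      (gaussKernel σ |x| |y|) := by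
  convert hasSum_gaussKernel σ |x| |y| using 2 with n
  rw [abs_mul, abs_mul, abs_gaussFeature, abs_gaussFeature,
    abs_of_nonneg (one_div_pow_mul_factorial_nonneg σ n)]

lemma integrable_gaussKernel_comp (σ : ℝ) {α : Type*} [MeasurableSpace α] (ρ : Measure α)
    [IsFiniteMeasure ρ] {f g : α → ℝ} (hf : Measurable f) (hg : Measurable g) :
    Integrable (fun a => gaussKernel σ (f a) (g a)) ρ := by
  refine Integrable.of_bound ?_ 1 (Filter.Eventually.of_forall fun a => ?_)
  · exact ((continuous_gaussKernel_uncurry σ).measurable.comp (hf.prodMk hg)).aestronglyMeasurable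
  · rw [Real.norm_of_nonneg (gaussKernel_pos σ _ _).le]
    exact gaussKernel_le_one σ _ _

theorem hasSum_integral_integral_gaussKernel (σ : ℝ) (μ ν : Measure ℝ)
    [IsFiniteMeasure μ] [IsFiniteMeasure ν] :
    HasSum (fun n : ℕ => 1 / (σ ^ (2 * n) * n.factorial) * (weightedMoment σ n μ * weightedMoment σ n ν))
      (∫ x, ∫ y, gaussKernel σ x y ∂ν ∂μ) := by
  set F : ℕ → ℝ × ℝ → ℝ := fun n p =>
    1 / (σ ^ (2 * n) * n.factorial) * (gaussFeature σ n p.1 * gaussFeature σ n p.2)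
  have hF_integral (n : ℕ) : ∫ p, F n p ∂μ.prod ν
      = 1 / (σ ^ (2 * n) * n.factorial) * (weightedMoment σ n μ * weightedMoment σ n ν) := by
    rw [integral_const_mul, integral_prod_mul]
    rfl
  have hdominated := hasSum_integral_of_dominated_convergence (μ := μ.prod ν)
    (f := fun p => gaussKernel σ p.1 p.2) (fun n p => |F n p|)
    (fun n => by fun_prop) (fun n => .of_forall fun p => le_of_eq (Real.norm_eq_abs _))
    (.of_forall fun p => (hasSum_abs_gaussKernel σ p.1 p.2).summable)
    ((integrable_gaussKernel_comp σ (μ.prod ν) measurable_fst.abs measurable_snd.abs).congr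
      (.of_forall fun p => (hasSum_abs_gaussKernel σ p.1 p.2).tsum_eq.symm))
    (.of_forall fun p => hasSum_gaussKernel σ p.1 p.2)
  rw [← integral_prod _ (integrable_gaussKernel_comp σ _ measurable_fst measurable_snd)]
  simpa only [hF_integral] using hdominated

theorem stmt_14_general (σ : ℝ)
    (μ ν : Measure ℝ) [IsProbabilityMeasure μ] [IsProbabilityMeasure ν] :
    mmdSq (gaussKernel σ) μ ν
      = ∑' n : ℕ, (1 / (σ ^ (2 * n) * n.factorial))
          * (weightedMoment σ n μ - weightedMoment σ n ν) ^ 2 := by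
  have hμμ := hasSum_integral_integral_gaussKernel σ μ μ
  have hνν := hasSum_integral_integral_gaussKernel σ ν ν
  have hμν := hasSum_integral_integral_gaussKernel σ μ ν
  refine (((hμμ.add hνν).sub (hμν.mul_left 2)).congr_fun fun n => ?_).tsum_eq.symm
  ring

/-- For the Gaussian kernel `k(x,y) = exp(−(x−y)²/(2σ²))` on `ℝ` and any two
probability measures `μ, ν` on `ℝ`, the squared MMD decomposes as
`MMD²(μ, ν; k) = ∑_{n=0}^∞ (1/(σ^{2n} n!)) (m̃ₙ(μ) − m̃ₙ(ν))²`,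
where `m̃ₙ(μ) = E_{x∼μ}[e^{−x²/(2σ²)} xⁿ]`. -/
theorem stmt_14 (σ : ℝ) (hσ : 0 < σ)
    (μ ν : Measure ℝ) [IsProbabilityMeasure μ] [IsProbabilityMeasure ν] :
    mmdSq (gaussKernel σ) μ ν
      = ∑' n : ℕ, (1 / (σ ^ (2 * n) * n.factorial))
          * (weightedMoment σ n μ - weightedMoment σ n ν) ^ 2 :=
  stmt_14_general σ μ ν
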